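/- arXiv:2005.03620 — 2 statements merged into one kernel-verified Lean document; each statement's English description precedes it below -/
import Mathlib

section
/- In the tandem AF described, the only preferred extensions are E1 = {A₁,A₂,A₃,A₉,Ā₆,A₄,A₅,e(A₅,A₇),e(A₄,A₈)}, E2 = {A₁,A₂,A₃,A₈,Ā₅,A₄,A₆,e(A₆,A₇),e(A₄,A₉)}, and E3 = {A₁,A₂,A₃,A₇,Ā₄,A₆,A₅,e(A₆,A₈),e(A₅,A₉)}. -/
/-- The arguments of the tandem AF. -/
inductive TArg : Type where
  | a1 | a2 | a3 | a4 | a5 | a6 | a7 | a8 | a9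
  | b4 | b5 | b6          -- the meta-arguments Ā₄, Ā₅, Ā₆
  | e57 | e67 | e48 | e68 | e49 | e59   -- the meta-arguments e(Aᵢ,Aⱼ)
  deriving DecidableEq

open TArg

/-- The attack relation of the tandem AF, given as a list of attacking pairs. -/
def tandemAttacks : List (TArg × TArg) :=
  [(a7,a8),(a8,a7),(a8,a9),(a9,a8),(a7,a9),(a9,a7),
   (a7,a4),(a4,a7),(a8,a5),(a5,a8),(a9,a6),(a6,a9),
   (a4,b4),(a5,b5),(a6,b6),
   (e57,a6),(e67,a5),(e48,a6),(e68,a4),(e49,a5),(e59,a4),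
   (b4,e48),(b4,e49),(b5,e57),(b5,e59),(b6,e67),(b6,e68),
   (a7,e57),(a7,e67),(a8,e48),(a8,e68),(a9,e49),(a9,e59)]

/-- x attacks y in the tandem AF. -/
def tAtt (x y : TArg) : Prop := (x, y) ∈ tandemAttacks

def E1 : Set TArg := {a1, a2, a3, a9, b6, a4, a5, e57, e48}
def E2 : Set TArg := {a1, a2, a3, a8, b5, a4, a6, e67, e49}
def E3 : Set TArg := {a1, a2, a3, a7, b4, a6, a5, e68, e59}

/-- S is conflict-free: no two elements of S attack each other. -/
def ConflictFree (att : TArg → TArg → Prop) (S : Set TArg) : Prop :=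
  ∀ b ∈ S, ∀ c ∈ S, ¬ att b c

/-- a is defended by S: every attacker of a is attacked by some element of S. -/
def Defends (att : TArg → TArg → Prop) (S : Set TArg) (a : TArg) : Prop :=
  ∀ b, att b a → ∃ c ∈ S, att c b

/-- S is admissible: conflict-free and self-defending. -/
def Admissible (att : TArg → TArg → Prop) (S : Set TArg) : Prop :=
  ConflictFree att S ∧ ∀ a ∈ S, Defends att S a

/-- S is a complete extension: admissible and containing all arguments it defends. -/
def CompleteExt (att : TArg → TArg → Prop) (S : Set TArg) : Prop :=
  Admissible att S ∧ ∀ a, Defends att S a → a ∈ S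

/-- S is a stable extension: conflict-free and attacking every argument outside S. -/
def StableExt (att : TArg → TArg → Prop) (S : Set TArg) : Prop :=
  ConflictFree att S ∧ ∀ a, a ∉ S → ∃ b ∈ S, att b a

/-- S is a preferred extension: a ⊆-maximal complete extension. -/
def PreferredExt (att : TArg → TArg → Prop) (S : Set TArg) : Prop :=
  CompleteExt att S ∧ ∀ T, CompleteExt att T → S ⊆ T → T = S


-- ======================= auxiliary material =======================

instance : Fintype TArg :=
  ⟨⟨[a1,a2,a3,a4,a5,a6,a7,a8,a9,b4,b5,b6,e57,e67,e48,e68,e49,e59], by decide⟩,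
   fun x => by cases x <;> decide⟩

instance instDecTAtt : ∀ x y, Decidable (tAtt x y) := fun x y =>
  inferInstanceAs (Decidable ((x, y) ∈ tandemAttacks))

instance instDecE1 : ∀ x, Decidable (x ∈ E1) := fun x =>
  decidable_of_iff (x ∈ ([a1,a2,a3,a9,b6,a4,a5,e57,e48] : List TArg)) (by simp [E1])

instance instDecE2 : ∀ x, Decidable (x ∈ E2) := fun x =>
  decidable_of_iff (x ∈ ([a1,a2,a3,a8,b5,a4,a6,e67,e49] : List TArg)) (by simp [E2])

instance instDecE3 : ∀ x, Decidable (x ∈ E3) := fun x =>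
  decidable_of_iff (x ∈ ([a1,a2,a3,a7,b4,a6,a5,e68,e59] : List TArg)) (by simp [E3])

lemma e1_good : CompleteExt tAtt E1 ∧ StableExt tAtt E1 := by
  unfold CompleteExt StableExt Admissible ConflictFree Defends; decide
lemma e2_good : CompleteExt tAtt E2 ∧ StableExt tAtt E2 := by
  unfold CompleteExt StableExt Admissible ConflictFree Defends; decide
lemma e3_good : CompleteExt tAtt E3 ∧ StableExt tAtt E3 := by
  unfold CompleteExt StableExt Admissible ConflictFree Defends; decide

lemma stable_max {E T : Set TArg} (hst : StableExt tAtt E)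
    (hT : ConflictFree tAtt T) (hsub : E ⊆ T) : T = E := by
  ext x
  constructor
  · intro hx
    by_contra hxe
    obtain ⟨b, hb, hba⟩ := hst.2 x hxe
    exact hT b (hsub hb) x hx hba
  · exact (hsub ·)

section Cases

variable {S : Set TArg}

lemma not_mem_conf (hadm : Admissible tAtt S) {x y : TArg} (hx : x ∈ S) (h : tAtt x y ∨ tAtt y x) : y ∉ S :=
  fun hy => h.elim (fun a => hadm.1 x hx y hy a) (fun a => hadm.1 y hy x hx a)

lemma not_mem_undef (hadm : Admissible tAtt S) {x y : TArg} (hatt : tAtt y x) (h : ∀ c, tAtt c y → c ∉ S) : x ∉ S :=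
  fun hx => by
    obtain ⟨c, hc, hcy⟩ := hadm.2 x hx y hatt
    exact h c hcy hc

-- attacker characterizations
lemma att_a4 : ∀ c, tAtt c a4 → c = a7 ∨ c = e68 ∨ c = e59 := by decide
lemma att_a5 : ∀ c, tAtt c a5 → c = a8 ∨ c = e67 ∨ c = e49 := by decide
lemma att_a6 : ∀ c, tAtt c a6 → c = a9 ∨ c = e57 ∨ c = e48 := by decide
lemma att_a7 : ∀ c, tAtt c a7 → c = a8 ∨ c = a9 ∨ c = a4 := by decide
lemma att_a8 : ∀ c, tAtt c a8 → c = a7 ∨ c = a9 ∨ c = a5 := by decide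
lemma att_a9 : ∀ c, tAtt c a9 → c = a7 ∨ c = a8 ∨ c = a6 := by decide
lemma att_b4 : ∀ c, tAtt c b4 → c = a4 := by decide
lemma att_b5 : ∀ c, tAtt c b5 → c = a5 := by decide
lemma att_b6 : ∀ c, tAtt c b6 → c = a6 := by decide
lemma att_e68 : ∀ c, tAtt c e68 → c = b6 ∨ c = a8 := by decide
lemma att_e67 : ∀ c, tAtt c e67 → c = b6 ∨ c = a7 := by decide
lemma att_e57 : ∀ c, tAtt c e57 → c = b5 ∨ c = a7 := by decide

lemma case_a9 (hadm : Admissible tAtt S) (h9 : a9 ∈ S) : S ⊆ E1 := by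
  have h7 : a7 ∉ S := not_mem_conf hadm h9 (Or.inl (by decide))
  have h8 : a8 ∉ S := not_mem_conf hadm h9 (Or.inl (by decide))
  have h6 : a6 ∉ S := not_mem_conf hadm h9 (Or.inl (by decide))
  have h49 : e49 ∉ S := not_mem_conf hadm h9 (Or.inl (by decide))
  have h59 : e59 ∉ S := not_mem_conf hadm h9 (Or.inl (by decide))
  have h67 : e67 ∉ S := not_mem_undef hadm (show tAtt b6 e67 by decide)
    (fun c hc => by cases att_b6 c hc; exact h6)
  have h68 : e68 ∉ S := not_mem_undef hadm (show tAtt b6 e68 by decide)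
    (fun c hc => by cases att_b6 c hc; exact h6)
  have hb4 : b4 ∉ S := not_mem_undef hadm (show tAtt a4 b4 by decide)
    (fun c hc => by rcases att_a4 c hc with rfl | rfl | rfl; exacts [h7, h68, h59])
  have hb5 : b5 ∉ S := not_mem_undef hadm (show tAtt a5 b5 by decide)
    (fun c hc => by rcases att_a5 c hc with rfl | rfl | rfl; exacts [h8, h67, h49])
  intro x hx
  cases x
  exacts [by decide, by decide, by decide, by decide, by decide, absurd hx h6,
    absurd hx h7, absurd hx h8, by decide, absurd hx hb4, absurd hx hb5, by decide,
    by decide, absurd hx h67, by decide, absurd hx h68, absurd hx h49, absurd hx h59]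

lemma case_a8 (hadm : Admissible tAtt S) (h8 : a8 ∈ S) : S ⊆ E2 := by
  have h7 : a7 ∉ S := not_mem_conf hadm h8 (Or.inl (by decide))
  have h9 : a9 ∉ S := not_mem_conf hadm h8 (Or.inl (by decide))
  have h5 : a5 ∉ S := not_mem_conf hadm h8 (Or.inl (by decide))
  have h48 : e48 ∉ S := not_mem_conf hadm h8 (Or.inl (by decide))
  have h68 : e68 ∉ S := not_mem_conf hadm h8 (Or.inl (by decide))
  have h57 : e57 ∉ S := not_mem_undef hadm (show tAtt b5 e57 by decide)
    (fun c hc => by cases att_b5 c hc; exact h5)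
  have h59 : e59 ∉ S := not_mem_undef hadm (show tAtt b5 e59 by decide)
    (fun c hc => by cases att_b5 c hc; exact h5)
  have hb4 : b4 ∉ S := not_mem_undef hadm (show tAtt a4 b4 by decide)
    (fun c hc => by rcases att_a4 c hc with rfl | rfl | rfl; exacts [h7, h68, h59])
  have hb6 : b6 ∉ S := not_mem_undef hadm (show tAtt a6 b6 by decide)
    (fun c hc => by rcases att_a6 c hc with rfl | rfl | rfl; exacts [h9, h57, h48])
  intro x hx
  cases x
  exacts [by decide, by decide, by decide, by decide, absurd hx h5, by decide,
    absurd hx h7, by decide, absurd hx h9, absurd hx hb4, by decide, absurd hx hb6,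
    absurd hx h57, by decide, absurd hx h48, absurd hx h68, by decide, absurd hx h59]

lemma case_a7 (hadm : Admissible tAtt S) (h7 : a7 ∈ S) : S ⊆ E3 := by
  have h8 : a8 ∉ S := not_mem_conf hadm h7 (Or.inl (by decide))
  have h9 : a9 ∉ S := not_mem_conf hadm h7 (Or.inl (by decide))
  have h4 : a4 ∉ S := not_mem_conf hadm h7 (Or.inl (by decide))
  have h57 : e57 ∉ S := not_mem_conf hadm h7 (Or.inl (by decide))
  have h67 : e67 ∉ S := not_mem_conf hadm h7 (Or.inl (by decide))
  have h48 : e48 ∉ S := not_mem_undef hadm (show tAtt b4 e48 by decide)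
    (fun c hc => by cases att_b4 c hc; exact h4)
  have h49 : e49 ∉ S := not_mem_undef hadm (show tAtt b4 e49 by decide)
    (fun c hc => by cases att_b4 c hc; exact h4)
  have hb5 : b5 ∉ S := not_mem_undef hadm (show tAtt a5 b5 by decide)
    (fun c hc => by rcases att_a5 c hc with rfl | rfl | rfl; exacts [h8, h67, h49])
  have hb6 : b6 ∉ S := not_mem_undef hadm (show tAtt a6 b6 by decide)
    (fun c hc => by rcases att_a6 c hc with rfl | rfl | rfl; exacts [h9, h57, h48])
  intro x hx
  cases x
  exacts [by decide, by decide, by decide, absurd hx h4, by decide, by decide,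
    by decide, absurd hx h8, absurd hx h9, by decide, absurd hx hb5, absurd hx hb6,
    absurd hx h57, absurd hx h67, absurd hx h48, by decide, absurd hx h49, by decide]

lemma admissible_sub (hadm : Admissible tAtt S) : S ⊆ E1 ∨ S ⊆ E2 ∨ S ⊆ E3 := by
  by_cases h9 : a9 ∈ S
  · exact Or.inl (case_a9 hadm h9)
  by_cases h8 : a8 ∈ S
  · exact Or.inr (Or.inl (case_a8 hadm h8))
  by_cases h7 : a7 ∈ S
  · exact Or.inr (Or.inr (case_a7 hadm h7))
  by_cases hb6 : b6 ∈ S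
  · -- S ⊆ E1
    refine Or.inl ?_
    have h6 : a6 ∉ S := not_mem_conf hadm hb6 (Or.inr (by decide))
    have h67 : e67 ∉ S := not_mem_conf hadm hb6 (Or.inl (by decide))
    have h68 : e68 ∉ S := not_mem_conf hadm hb6 (Or.inl (by decide))
    have h49 : e49 ∉ S := not_mem_undef hadm (show tAtt a9 e49 by decide)
      (fun c hc => by rcases att_a9 c hc with rfl | rfl | rfl; exacts [h7, h8, h6])
    have h59 : e59 ∉ S := not_mem_undef hadm (show tAtt a9 e59 by decide)
      (fun c hc => by rcases att_a9 c hc with rfl | rfl | rfl; exacts [h7, h8, h6])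
    have hb5 : b5 ∉ S := not_mem_undef hadm (show tAtt a5 b5 by decide)
      (fun c hc => by rcases att_a5 c hc with rfl | rfl | rfl; exacts [h8, h67, h49])
    have hb4 : b4 ∉ S := not_mem_undef hadm (show tAtt a4 b4 by decide)
      (fun c hc => by rcases att_a4 c hc with rfl | rfl | rfl; exacts [h7, h68, h59])
    intro x hx
    cases x
    exacts [by decide, by decide, by decide, by decide, by decide, absurd hx h6,
      absurd hx h7, absurd hx h8, by decide, absurd hx hb4, absurd hx hb5, by decide,
      by decide, absurd hx h67, by decide, absurd hx h68, absurd hx h49, absurd hx h59]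
  by_cases hb5 : b5 ∈ S
  · -- S ⊆ E2
    refine Or.inr (Or.inl ?_)
    have h5 : a5 ∉ S := not_mem_conf hadm hb5 (Or.inr (by decide))
    have h57 : e57 ∉ S := not_mem_conf hadm hb5 (Or.inl (by decide))
    have h59 : e59 ∉ S := not_mem_conf hadm hb5 (Or.inl (by decide))
    have h48 : e48 ∉ S := not_mem_undef hadm (show tAtt a8 e48 by decide)
      (fun c hc => by rcases att_a8 c hc with rfl | rfl | rfl; exacts [h7, h9, h5])
    have h68 : e68 ∉ S := not_mem_undef hadm (show tAtt a8 e68 by decide)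
      (fun c hc => by rcases att_a8 c hc with rfl | rfl | rfl; exacts [h7, h9, h5])
    have hb4 : b4 ∉ S := not_mem_undef hadm (show tAtt a4 b4 by decide)
      (fun c hc => by rcases att_a4 c hc with rfl | rfl | rfl; exacts [h7, h68, h59])
    have hb6' : b6 ∉ S := not_mem_undef hadm (show tAtt a6 b6 by decide)
      (fun c hc => by rcases att_a6 c hc with rfl | rfl | rfl; exacts [h9, h57, h48])
    intro x hx
    cases x
    exacts [by decide, by decide, by decide, by decide, absurd hx h5, by decide,
      absurd hx h7, by decide, absurd hx h9, absurd hx hb4, by decide, absurd hx hb6',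
      absurd hx h57, by decide, absurd hx h48, absurd hx h68, by decide, absurd hx h59]
  by_cases hb4 : b4 ∈ S
  · -- S ⊆ E3
    refine Or.inr (Or.inr ?_)
    have h4 : a4 ∉ S := not_mem_conf hadm hb4 (Or.inr (by decide))
    have h48 : e48 ∉ S := not_mem_conf hadm hb4 (Or.inl (by decide))
    have h49 : e49 ∉ S := not_mem_conf hadm hb4 (Or.inl (by decide))
    have h57 : e57 ∉ S := not_mem_undef hadm (show tAtt a7 e57 by decide)
      (fun c hc => by rcases att_a7 c hc with rfl | rfl | rfl; exacts [h8, h9, h4])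
    have h67 : e67 ∉ S := not_mem_undef hadm (show tAtt a7 e67 by decide)
      (fun c hc => by rcases att_a7 c hc with rfl | rfl | rfl; exacts [h8, h9, h4])
    have hb5' : b5 ∉ S := not_mem_undef hadm (show tAtt a5 b5 by decide)
      (fun c hc => by rcases att_a5 c hc with rfl | rfl | rfl; exacts [h8, h67, h49])
    have hb6' : b6 ∉ S := not_mem_undef hadm (show tAtt a6 b6 by decide)
      (fun c hc => by rcases att_a6 c hc with rfl | rfl | rfl; exacts [h9, h57, h48])
    intro x hx
    cases x
    exacts [by decide, by decide, by decide, absurd hx h4, by decide, by decide,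
      by decide, absurd hx h8, absurd hx h9, by decide, absurd hx hb5', absurd hx hb6',
      absurd hx h57, absurd hx h67, absurd hx h48, by decide, absurd hx h49, by decide]
  · -- none of a7,a8,a9,b4,b5,b6 in S : S ⊆ {a1,a2,a3} ⊆ E1
    refine Or.inl ?_
    have h4 : a4 ∉ S := not_mem_undef hadm (show tAtt e68 a4 by decide)
      (fun c hc => by rcases att_e68 c hc with rfl | rfl; exacts [hb6, h8])
    have h5 : a5 ∉ S := not_mem_undef hadm (show tAtt e67 a5 by decide)
      (fun c hc => by rcases att_e67 c hc with rfl | rfl; exacts [hb6, h7])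
    have h6 : a6 ∉ S := not_mem_undef hadm (show tAtt e57 a6 by decide)
      (fun c hc => by rcases att_e57 c hc with rfl | rfl; exacts [hb5, h7])
    have h57 : e57 ∉ S := not_mem_undef hadm (show tAtt a7 e57 by decide)
      (fun c hc => by rcases att_a7 c hc with rfl | rfl | rfl; exacts [h8, h9, h4])
    have h67 : e67 ∉ S := not_mem_undef hadm (show tAtt a7 e67 by decide)
      (fun c hc => by rcases att_a7 c hc with rfl | rfl | rfl; exacts [h8, h9, h4])
    have h48 : e48 ∉ S := not_mem_undef hadm (show tAtt a8 e48 by decide)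
      (fun c hc => by rcases att_a8 c hc with rfl | rfl | rfl; exacts [h7, h9, h5])
    have h68 : e68 ∉ S := not_mem_undef hadm (show tAtt a8 e68 by decide)
      (fun c hc => by rcases att_a8 c hc with rfl | rfl | rfl; exacts [h7, h9, h5])
    have h49 : e49 ∉ S := not_mem_undef hadm (show tAtt a9 e49 by decide)
      (fun c hc => by rcases att_a9 c hc with rfl | rfl | rfl; exacts [h7, h8, h6])
    have h59 : e59 ∉ S := not_mem_undef hadm (show tAtt a9 e59 by decide)
      (fun c hc => by rcases att_a9 c hc with rfl | rfl | rfl; exacts [h7, h8, h6])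
    intro x hx
    cases x
    exacts [by decide, by decide, by decide, absurd hx h4, absurd hx h5, absurd hx h6,
      absurd hx h7, absurd hx h8, absurd hx h9, absurd hx hb4, absurd hx hb5, absurd hx hb6,
      absurd hx h57, absurd hx h67, absurd hx h48, absurd hx h68, absurd hx h49, absurd hx h59]

end Cases

/-- The only preferred extensions of the tandem AF are E1, E2 and E3. -/
theorem tandem_preferred_iff :
    ∀ S : Set TArg, PreferredExt tAtt S ↔ (S = E1 ∨ S = E2 ∨ S = E3) := by
  intro S
  constructor
  · rintro ⟨hcomp, hmax⟩
    rcases admissible_sub hcomp.1 with h | h | h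
    · exact Or.inl (hmax E1 e1_good.1 h).symm
    · exact Or.inr (Or.inl (hmax E2 e2_good.1 h).symm)
    · exact Or.inr (Or.inr (hmax E3 e3_good.1 h).symm)
  · rintro (rfl | rfl | rfl)
    · exact ⟨e1_good.1, fun T hT hsub => stable_max e1_good.2 hT.1.1 hsub⟩
    · exact ⟨e2_good.1, fun T hT hsub => stable_max e2_good.2 hT.1.1 hsub⟩
    · exact ⟨e3_good.1, fun T hT hsub => stable_max e3_good.2 hT.1.1 hsub⟩
end

section
/- In the tandem AF, any admissible set E containing A₆ and excluding A₇, A₈, A₉ leads to a contradiction: admissibility forces Ā₅ ∈ E and Ā₄ ∈ E (to defend A₆ from e(A₅,A₇) and e(A₄,A₈)), then e(A₆,A₈) ∈ E (to defend Ā₄ from A₄), then A₅ ∈ E (to defend e(A₆,A₈) from A₈), contradicting conflict-freeness since A₅ attacks Ā₅. Hence no admissible set disjoint from {A₇, A₈, A₉} contains A₆. -/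
open TArg

instance (x y : TArg) : Decidable (tAtt x y) :=
  inferInstanceAs (Decidable ((x, y) ∈ tandemAttacks))

/-- No admissible set of the tandem AF that is disjoint from {A₇, A₈, A₉}
contains A₆. -/
theorem tandem_no_admissible_a6 :
    ∀ E : Set TArg, Admissible tAtt E →
      TArg.a7 ∉ E → TArg.a8 ∉ E → TArg.a9 ∉ E → TArg.a6 ∉ E := by
  have att_e57 : ∀ c, tAtt c e57 → c = b5 ∨ c = a7 := by intro c; cases c <;> decide
  have att_e48 : ∀ c, tAtt c e48 → c = b4 ∨ c = a8 := by intro c; cases c <;> decide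
  have att_a4 : ∀ c, tAtt c a4 → c = a7 ∨ c = e68 ∨ c = e59 := by
    intro c; cases c <;> decide
  have att_a8 : ∀ c, tAtt c a8 → c = a7 ∨ c = a9 ∨ c = a5 := by
    intro c; cases c <;> decide
  rintro E ⟨cf, hdef⟩ h7 h8 h9 h6
  obtain ⟨c, hc, hatt⟩ := hdef a6 h6 e57 (by decide)
  rcases att_e57 c hatt with rfl | rfl
  · -- b5 ∈ E
    obtain ⟨c, hc', hatt'⟩ := hdef a6 h6 e48 (by decide)
    rcases att_e48 c hatt' with rfl | rfl
    · -- b4 ∈ E; defend b4 from a4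
      obtain ⟨c, hc2, hatt2⟩ := hdef b4 hc' a4 (by decide)
      rcases att_a4 c hatt2 with rfl | rfl | rfl
      · exact h7 hc2
      · -- e68 ∈ E; defend from a8
        obtain ⟨c, hc3, hatt3⟩ := hdef e68 hc2 a8 (by decide)
        rcases att_a8 c hatt3 with rfl | rfl | rfl
        · exact h7 hc3
        · exact h9 hc3
        · exact cf a5 hc3 b5 hc (by decide)
      · exact cf b5 hc e59 hc2 (by decide)
    · exact h8 hc'
  · exact h7 hc
end
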